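/- Let M be a finitely generated primitive monoid. Then the set P of prime elements of M is finite, P generates M as a monoid, and every generating set of M contains P; in particular P is the unique minimal generating set of M. -/

import Mathlib

/-- The algebraic preorder on a commutative monoid: `x ≤ y` iff `∃ z, y = x + z`. -/
def AlgLE {M : Type*} [AddCommMonoid M] (x y : M) : Prop := ∃ z, y = x + z

/-- A monoid is conical if `x + y = 0` implies `x = 0` and `y = 0`. -/
def IsConical (M : Type*) [AddCommMonoid M] : Prop := ∀ x y : M, x + y = 0 → x = 0 ∧ y = 0

/-- A refinement monoid: every equality `a + b = c + d` admits a refinement. -/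
def IsRefinement (M : Type*) [AddCommMonoid M] : Prop :=
  ∀ a b c d : M, a + b = c + d →
    ∃ x y z w : M, a = x + y ∧ b = z + w ∧ c = x + z ∧ d = y + w

/-- Separative: `a + a = a + b` and `b + b = a + b` imply `a = b`. -/
def IsSeparative (M : Type*) [AddCommMonoid M] : Prop :=
  ∀ a b : M, a + a = a + b → b + b = a + b → a = b

/-- A prime element: `p ≠ 0` and `p ≤ a + b` implies `p ≤ a` or `p ≤ b`
(algebraic preorder). -/
def IsPrimeElem {M : Type*} [AddCommMonoid M] (p : M) : Prop :=
  p ≠ 0 ∧ ∀ a b : M, AlgLE p (a + b) → AlgLE p a ∨ AlgLE p b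

/-- Primely generated: every element is a finite sum of prime elements. -/
def PrimelyGenerated (M : Type*) [AddCommMonoid M] : Prop :=
  ∀ x : M, ∃ l : Multiset M, (∀ p ∈ l, IsPrimeElem p) ∧ x = l.sum

/-- Antisymmetric: the algebraic preorder is a partial order. -/
def IsAntisymmetric (M : Type*) [AddCommMonoid M] : Prop :=
  ∀ x y : M, AlgLE x y → AlgLE y x → x = y

/-- A primitive monoid: an antisymmetric, primely generated refinement monoid. -/
def IsPrimitive (M : Type*) [AddCommMonoid M] : Prop :=
  IsAntisymmetric M ∧ PrimelyGenerated M ∧ IsRefinement M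

/-!
By primality, a prime `p` below an element of `closure S` lies below a single generator `s ∈ S`
(antisymmetry rules out `p ≤ 0`, the case of the empty sum). Taking that element to be `p` itself
gives `p ≤ s ≤ p`, hence `p = s ∈ S`: every generating set contains all primes, and a finite one
bounds their number.
-/

section

variable {M : Type*} [AddCommMonoid M]

theorem AlgLE.refl (x : M) : AlgLE x x := ⟨0, (add_zero x).symm⟩

theorem AlgLE.trans {x y z : M} (hxy : AlgLE x y) (hyz : AlgLE y z) : AlgLE x z := by
  obtain ⟨a, rfl⟩ := hxy
  obtain ⟨b, rfl⟩ := hyz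
  exact ⟨a + b, add_assoc x a b⟩

theorem AlgLE.add_right {x y : M} (z : M) (hxy : AlgLE x y) : AlgLE x (y + z) :=
  hxy.trans ⟨z, rfl⟩

theorem AlgLE.add_left {x y : M} (z : M) (hxy : AlgLE x y) : AlgLE x (z + y) :=
  add_comm y z ▸ hxy.add_right z

theorem IsPrimeElem.not_algLE_zero (hM : IsAntisymmetric M) {p : M} (hp : IsPrimeElem p) :
    ¬AlgLE p 0 :=
  fun h ↦ hp.1 (hM p 0 h ⟨p, (zero_add p).symm⟩)

theorem IsPrimeElem.exists_mem_algLE_of_mem_closure {p x : M} {S : Set M} (hp : IsPrimeElem p)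
    (hp0 : ¬AlgLE p 0) (hx : x ∈ AddSubmonoid.closure S) (hpx : AlgLE p x) :
    ∃ s ∈ S, AlgLE p s ∧ AlgLE s x := by
  induction hx using AddSubmonoid.closure_induction with
  | mem s hs => exact ⟨s, hs, hpx, AlgLE.refl s⟩
  | zero => exact absurd hpx hp0
  | add y z _ _ ihy ihz =>
    rcases hp.2 y z hpx with hpy | hpz
    · obtain ⟨s, hs, hps, hsy⟩ := ihy hpy
      exact ⟨s, hs, hps, hsy.add_right z⟩
    · obtain ⟨s, hs, hps, hsz⟩ := ihz hpz
      exact ⟨s, hs, hps, hsz.add_left y⟩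

theorem IsPrimeElem.mem_of_mem_closure (hM : IsAntisymmetric M) {p : M} {S : Set M}
    (hp : IsPrimeElem p) (hpS : p ∈ AddSubmonoid.closure S) : p ∈ S := by
  obtain ⟨s, hs, hps, hsp⟩ :=
    hp.exists_mem_algLE_of_mem_closure (hp.not_algLE_zero hM) hpS (AlgLE.refl p)
  rwa [hM p s hps hsp]

theorem IsAntisymmetric.setOf_isPrimeElem_subset (hM : IsAntisymmetric M) {S : Set M}
    (hS : AddSubmonoid.closure S = ⊤) : {p : M | IsPrimeElem p} ⊆ S :=
  fun _ hp ↦ hp.mem_of_mem_closure hM (hS ▸ AddSubmonoid.mem_top _)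

theorem PrimelyGenerated.closure_setOf_isPrimeElem (hM : PrimelyGenerated M) :
    AddSubmonoid.closure {p : M | IsPrimeElem p} = ⊤ := by
  refine eq_top_iff.2 fun x _ ↦ ?_
  obtain ⟨l, hl, rfl⟩ := hM x
  exact AddSubmonoid.multiset_sum_mem _ l fun p hp ↦ AddSubmonoid.subset_closure (hl p hp)

end

/-- In a finitely generated primitive monoid, the set of primes is finite, it
generates the monoid, and it is contained in every generating set; hence it is
the unique minimal generating set. -/
theorem statement9 (M : Type*) [AddCommMonoid M] (hprim : IsPrimitive M)
    (hfg : ∃ S : Finset M, AddSubmonoid.closure (S : Set M) = ⊤) :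
    {p : M | IsPrimeElem p}.Finite ∧
    AddSubmonoid.closure {p : M | IsPrimeElem p} = ⊤ ∧
    ∀ S : Set M, AddSubmonoid.closure S = ⊤ → {p : M | IsPrimeElem p} ⊆ S := by
  obtain ⟨hanti, hpg, -⟩ := hprim
  obtain ⟨S, hS⟩ := hfg
  exact ⟨S.finite_toSet.subset (hanti.setOf_isPrimeElem_subset hS),
    hpg.closure_setOf_isPrimeElem, fun _ ↦ hanti.setOf_isPrimeElem_subset⟩
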